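/- arXiv:0910.2316 — 3 statements merged into one kernel-verified Lean document; each statement's English description precedes it below -/
import Mathlib

section
/- Let Σ be a simplicial fan in a lattice N. The deformed group ring Z[N]^Σ, the free abelian group on symbols y^v for v ∈ |Σ| ∩ N with product y^u · y^v = y^{u+v} if u and v lie in a common cone of Σ and 0 otherwise, is a well-defined associative commutative ring. -/
/-!
Encode the product of basis symbols as a partial product `μ : ι → ι → Option ι` on the index
set, `none` meaning zero, and extend it bilinearly. Commutativity and associativity then only
have to be checked on basis symbols, where associativity reads
`(μ u v).bind (μ · w) = (μ v w).bind (μ u ·)`. For a fan, both sides are defined exactly when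
`u`, `v`, `w` lie in one cone: a cone containing `u + v` contains `u` and `v` by the face
condition. The unit is `y^0`, or `0` when `|Σ|` is empty.
-/

/-- Multiplication of a commutative ring structure, made explicit. -/
def ringMul {T : Type*} (R : CommRing T) (a b : T) : T := by letI := R; exact a * b

/-- Addition of a commutative ring structure, made explicit. -/
def ringAdd {T : Type*} (R : CommRing T) (a b : T) : T := by letI := R; exact a + b

namespace PartialMul

open Finsupp

variable {ι k : Type*} [CommRing k] (μ : ι → ι → Option ι)

noncomputable def basisVec (o : Option ι) : ι →₀ k := o.elim 0 (single · 1)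

@[simp] lemma basisVec_none : (basisVec none : ι →₀ k) = 0 := rfl

@[simp] lemma basisVec_some (u : ι) : (basisVec (some u) : ι →₀ k) = single u 1 := rfl

noncomputable def mulₗ : (ι →₀ k) →ₗ[k] (ι →₀ k) →ₗ[k] (ι →₀ k) :=
  linearCombination k fun u => linearCombination k fun v => basisVec (μ u v)

lemma mulₗ_single_single (u v : ι) (a b : k) :
    mulₗ μ (single u a) (single v b) = (a * b) • basisVec (μ u v) := by
  simp [mulₗ, mul_smul, smul_comm a b]

lemma mulₗ_basisVec_left (o : Option ι) (w : ι) :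
    mulₗ μ (basisVec o) (single w (1 : k)) = basisVec (o.bind (μ · w)) := by
  cases o <;> simp [mulₗ_single_single]

lemma mulₗ_basisVec_right (u : ι) (o : Option ι) :
    mulₗ μ (single u (1 : k)) (basisVec o) = basisVec (o.bind (μ u ·)) := by
  cases o <;> simp [mulₗ_single_single]

lemma mulₗ_flip (hcomm : ∀ u v, μ u v = μ v u) : (mulₗ (k := k) μ).flip = mulₗ μ := by
  ext u v
  simp [mulₗ_single_single, hcomm u v]

lemma mulₗ_assoc (hassoc : ∀ u v w, (μ u v).bind (μ · w) = (μ v w).bind (μ u ·)) :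
    (mulₗ (k := k) μ).compr₂ (mulₗ μ) =
      (LinearMap.llcomp k _ _ _).compl₁₂ (mulₗ μ) (mulₗ μ) := by
  ext u v w
  simp [mulₗ_single_single, mulₗ_basisVec_left, mulₗ_basisVec_right, hassoc]

noncomputable abbrev commRing (hcomm : ∀ u v, μ u v = μ v u)
    (hassoc : ∀ u v w, (μ u v).bind (μ · w) = (μ v w).bind (μ u ·))
    (one : ι →₀ k) (one_mul_single : ∀ v, mulₗ μ one (single v 1) = single v 1) :
    CommRing (ι →₀ k) :=
  have mul_comm (f g : ι →₀ k) : mulₗ μ f g = mulₗ μ g f :=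
    LinearMap.congr_fun₂ (mulₗ_flip μ hcomm) g f
  have one_mul (f : ι →₀ k) : mulₗ μ one f = f :=
    LinearMap.congr_fun (show mulₗ μ one = LinearMap.id by ext v; simp [one_mul_single]) f
  { (inferInstance : AddCommGroup (ι →₀ k)) with
    mul := fun f g => mulₗ μ f g
    one := one
    left_distrib := fun f g h => map_add (mulₗ μ f) g h
    right_distrib := fun f g h => LinearMap.map_add₂ (mulₗ μ) f g h
    zero_mul := fun f => LinearMap.map_zero₂ (mulₗ μ) f
    mul_zero := fun f => map_zero (mulₗ μ f)
    mul_assoc := fun f g h =>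
      LinearMap.congr_fun₂ (LinearMap.congr_fun (mulₗ_assoc μ hassoc) f) g h
    one_mul := one_mul
    mul_one := fun f => (mul_comm f one).trans (one_mul f)
    mul_comm := mul_comm }

lemma ringMul_commRing (hcomm : ∀ u v, μ u v = μ v u)
    (hassoc : ∀ u v w, (μ u v).bind (μ · w) = (μ v w).bind (μ u ·))
    (one : ι →₀ k) (one_mul_single : ∀ v, mulₗ μ one (single v 1) = single v 1)
    (f g : ι →₀ k) :
    ringMul (commRing μ hcomm hassoc one one_mul_single) f g = mulₗ μ f g :=
  rfl

end PartialMul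

section Fan

variable {V : Type*} (Sigma : Set (Set V))

def SharesCone (u v : V) : Prop := ∃ σ ∈ Sigma, u ∈ σ ∧ v ∈ σ

lemma SharesCone.symm {Sigma} {u v : V} : SharesCone Sigma u v → SharesCone Sigma v u :=
  fun ⟨σ, hσ, hu, hv⟩ => ⟨σ, hσ, hv, hu⟩

variable [AddCommMonoid V] (L : AddSubmonoid V)

abbrev FanLatticePoint := {v : V // (∃ σ ∈ Sigma, v ∈ σ) ∧ v ∈ L}

variable {L Sigma} (hadd : ∀ σ ∈ Sigma, ∀ x ∈ σ, ∀ y ∈ σ, x + y ∈ σ)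
include hadd

lemma sharesCone_and_add_iff
    (hface : ∀ σ ∈ Sigma, ∀ τ ∈ Sigma, ∀ x ∈ σ, ∀ y ∈ σ, x + y ∈ τ → x ∈ τ ∧ y ∈ τ)
    (u v w : V) :
    SharesCone Sigma u v ∧ SharesCone Sigma (u + v) w ↔
      SharesCone Sigma v w ∧ SharesCone Sigma u (v + w) := by
  constructor
  · rintro ⟨⟨σ, hσ, hu, hv⟩, ⟨τ, hτ, huv, hw⟩⟩
    obtain ⟨huτ, hvτ⟩ := hface σ hσ τ hτ _ hu _ hv huv
    exact ⟨⟨τ, hτ, hvτ, hw⟩, ⟨τ, hτ, huτ, hadd τ hτ _ hvτ _ hw⟩⟩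
  · rintro ⟨⟨σ, hσ, hv, hw⟩, ⟨τ, hτ, hu, hvw⟩⟩
    obtain ⟨hvτ, hwτ⟩ := hface σ hσ τ hτ _ hv _ hw hvw
    exact ⟨⟨τ, hτ, hu, hvτ⟩, ⟨τ, hτ, hadd τ hτ _ hu _ hvτ, hwτ⟩⟩

open Classical in
noncomputable def fanMul (u v : FanLatticePoint Sigma L) : Option (FanLatticePoint Sigma L) :=
  if h : SharesCone Sigma u v then
    some ⟨u + v, by obtain ⟨σ, hσ, hu, hv⟩ := h; exact ⟨σ, hσ, hadd σ hσ _ hu _ hv⟩,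
      add_mem u.2.2 v.2.2⟩
  else none

lemma fanMul_of_sharesCone {u v : FanLatticePoint Sigma L} (h : SharesCone Sigma u v) :
    ∃ huv, fanMul hadd u v = some ⟨u + v, huv⟩ :=
  ⟨_, dif_pos h⟩

lemma fanMul_of_not_sharesCone {u v : FanLatticePoint Sigma L} (h : ¬ SharesCone Sigma u v) :
    fanMul hadd u v = none :=
  dif_neg h

lemma fanMul_comm (u v : FanLatticePoint Sigma L) : fanMul hadd u v = fanMul hadd v u := by
  by_cases h : SharesCone Sigma u v
  · obtain ⟨_, huv⟩ := fanMul_of_sharesCone hadd h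
    obtain ⟨_, hvu⟩ := fanMul_of_sharesCone hadd h.symm
    simp [huv, hvu, add_comm]
  · rw [fanMul_of_not_sharesCone hadd h, fanMul_of_not_sharesCone hadd (mt SharesCone.symm h)]

lemma fanMul_bind_assoc
    (hface : ∀ σ ∈ Sigma, ∀ τ ∈ Sigma, ∀ x ∈ σ, ∀ y ∈ σ, x + y ∈ τ → x ∈ τ ∧ y ∈ τ)
    (u v w : FanLatticePoint Sigma L) :
    (fanMul hadd u v).bind (fanMul hadd · w) = (fanMul hadd v w).bind (fanMul hadd u ·) := by
  have key := sharesCone_and_add_iff hadd hface u v w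
  unfold fanMul
  by_cases huv : SharesCone Sigma u v <;> by_cases hvw : SharesCone Sigma v w <;>
    simp only [huv, hvw, dite_true, dite_false, Option.bind_some, Option.bind_none] <;>
    split_ifs <;> simp_all [add_assoc]

lemma fanMul_zero_left (h0 : ∀ σ ∈ Sigma, (0 : V) ∈ σ) (e v : FanLatticePoint Sigma L)
    (he : (e : V) = 0) : fanMul hadd e v = some v := by
  obtain ⟨σ, hσ, hv⟩ := v.2.1
  obtain ⟨_, hev⟩ := fanMul_of_sharesCone hadd ⟨σ, hσ, he ▸ h0 σ hσ, hv⟩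
  simp [hev, he]

lemma exists_mulₗ_fanMul_one {k : Type*} [CommRing k] (h0 : ∀ σ ∈ Sigma, (0 : V) ∈ σ) :
    ∃ one : FanLatticePoint Sigma L →₀ k,
      ∀ v, PartialMul.mulₗ (fanMul hadd) one (Finsupp.single v 1) = Finsupp.single v 1 := by
  rcases isEmpty_or_nonempty (FanLatticePoint Sigma L) with hS | ⟨⟨v₀⟩⟩
  · exact ⟨0, isEmptyElim⟩
  · obtain ⟨σ, hσ, -⟩ := v₀.2.1
    refine ⟨Finsupp.single ⟨0, ⟨σ, hσ, h0 σ hσ⟩, L.zero_mem⟩ 1, fun v => ?_⟩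
    rw [PartialMul.mulₗ_single_single, one_mul, one_smul, fanMul_zero_left hadd h0 _ v rfl,
      PartialMul.basisVec_some]

end Fan

theorem stmt9_general (d : ℕ) (L : AddSubgroup (Fin d → ℝ)) (Sigma : Finset (Set (Fin d → ℝ)))
    (h0 : ∀ σ ∈ Sigma, (0 : Fin d → ℝ) ∈ σ)
    (hadd : ∀ σ ∈ Sigma, ∀ x ∈ σ, ∀ y ∈ σ, x + y ∈ σ)
    (hface : ∀ σ ∈ Sigma, ∀ τ ∈ Sigma, ∀ x ∈ σ, ∀ y ∈ σ, x + y ∈ τ → x ∈ τ ∧ y ∈ τ) :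
    ∃ R : CommRing ({v : Fin d → ℝ // (∃ σ ∈ Sigma, v ∈ σ) ∧ v ∈ L} →₀ ℤ),
      (∀ a b, ringAdd R a b = a + b) ∧
      (∀ u v : {v : Fin d → ℝ // (∃ σ ∈ Sigma, v ∈ σ) ∧ v ∈ L},
        (∀ _h : ∃ σ ∈ Sigma, (u : Fin d → ℝ) ∈ σ ∧ (v : Fin d → ℝ) ∈ σ,
          ∀ huv : (∃ σ ∈ Sigma, (u : Fin d → ℝ) + v ∈ σ) ∧ (u : Fin d → ℝ) + v ∈ L,
            ringMul R (Finsupp.single u 1) (Finsupp.single v 1)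
              = Finsupp.single ⟨(u : Fin d → ℝ) + v, huv⟩ 1) ∧
        ((¬ ∃ σ ∈ Sigma, (u : Fin d → ℝ) ∈ σ ∧ (v : Fin d → ℝ) ∈ σ) →
          ringMul R (Finsupp.single u 1) (Finsupp.single v 1) = 0)) := by
  obtain ⟨one, hone⟩ :=
    exists_mulₗ_fanMul_one (k := ℤ) (L := L.toAddSubmonoid) (Sigma := ↑Sigma) hadd h0
  refine ⟨PartialMul.commRing _ (fanMul_comm hadd) (fanMul_bind_assoc hadd hface) one hone,
    fun _ _ => rfl, fun u v => ⟨fun hshare _ => ?_, fun hshare => ?_⟩⟩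
  · obtain ⟨_, huv⟩ := fanMul_of_sharesCone hadd hshare
    simp [PartialMul.ringMul_commRing, PartialMul.mulₗ_single_single, huv]
  · simp [PartialMul.ringMul_commRing, PartialMul.mulₗ_single_single,
      fanMul_of_not_sharesCone hadd hshare]

/-- let `Σ` be a (simplicial) fan in a lattice `L ⊆ ℝ^d`: a finite
collection of strongly convex cones, any two of which meet along a common face (encoded
by the property `hface`: if a sum of two elements of a cone lies in another cone of the
fan, then both summands do).  Then the deformed group ring `ℤ[N]^Σ` — the free abelian
group on symbols `y^v`, `v ∈ |Σ| ∩ L`, with product `y^u · y^v = y^{u+v}` if `u, v` lie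
in a common cone and `0` otherwise — is a well-defined associative commutative ring. -/
theorem stmt9 (d : ℕ) (L : AddSubgroup (Fin d → ℝ)) (Sigma : Finset (Set (Fin d → ℝ)))
    (h0 : ∀ σ ∈ Sigma, (0 : Fin d → ℝ) ∈ σ)
    (hadd : ∀ σ ∈ Sigma, ∀ x ∈ σ, ∀ y ∈ σ, x + y ∈ σ)
    (hconv : ∀ σ ∈ Sigma, ∀ x ∈ σ, -x ∈ σ → x = 0)
    (hface : ∀ σ ∈ Sigma, ∀ τ ∈ Sigma, ∀ x ∈ σ, ∀ y ∈ σ, x + y ∈ τ → x ∈ τ ∧ y ∈ τ) :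
    ∃ R : CommRing ({v : Fin d → ℝ // (∃ σ ∈ Sigma, v ∈ σ) ∧ v ∈ L} →₀ ℤ),
      (∀ a b, ringAdd R a b = a + b) ∧
      (∀ u v : {v : Fin d → ℝ // (∃ σ ∈ Sigma, v ∈ σ) ∧ v ∈ L},
        (∀ _h : ∃ σ ∈ Sigma, (u : Fin d → ℝ) ∈ σ ∧ (v : Fin d → ℝ) ∈ σ,
          ∀ huv : (∃ σ ∈ Sigma, (u : Fin d → ℝ) + v ∈ σ) ∧ (u : Fin d → ℝ) + v ∈ L,
            ringMul R (Finsupp.single u 1) (Finsupp.single v 1)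
              = Finsupp.single ⟨(u : Fin d → ℝ) + v, huv⟩ 1) ∧
        ((¬ ∃ σ ∈ Sigma, (u : Fin d → ℝ) ∈ σ ∧ (v : Fin d → ℝ) ∈ σ) →
          ringMul R (Finsupp.single u 1) (Finsupp.single v 1) = 0)) :=
  stmt9_general d L Sigma h0 hadd hface
end

section
/- Let Σ be a smooth fan in a lattice N, with primitive ray generators v_1,...,v_r. The map sending the monomial x_{i_1}^{a_1} ⋯ x_{i_d}^{a_d} to y^{a_1 v_{i_1} + ⋯ + a_d v_{i_d}} induces a ring isomorphism from the Stanley–Reisner ring SR(Σ) = Z[x_1,...,x_r]/(x_{i_1}⋯x_{i_s} : v_{i_1},...,v_{i_s} do not span a cone of Σ) onto the deformed group ring Z[N]^Σ. In particular SR(Σ) has a Z-basis indexed by the lattice points of |Σ| ∩ N. -/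
/-! The assignment `x_i ↦ y^{v_i}` sends a monomial `x^a` to `y^{∑ a_i v_i}` when the rays in
its support lie in a common cone and to `0` otherwise; in particular it kills the Stanley–Reisner
ideal. The induction on `a` rests on the face property: if `∑ a_j v_j`, a sum of elements of a
cone `σ`, lies in a cone `τ`, then so does every `v_i` with `a_i ≠ 0`. Smoothness says that every
lattice point `w` of `|Σ|` is `∑ a_i v_i` for exactly one cone-supported `a`, so `y^w ↦ x^a` is an
inverse, and the basis `(y^w)` transports to `SR(Σ)`. -/

open MvPolynomial

theorem Finsupp.induction_single_one {ι : Type*} {motive : (ι →₀ ℕ) → Prop} (a : ι →₀ ℕ)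
    (zero : motive 0) (single_one_add : ∀ i a, motive a → motive (single i 1 + a)) :
    motive a := by
  induction a using Finsupp.induction with
  | zero => exact zero
  | single_add i n a _ _ ih =>
    have key : ∀ k, motive (single i k + a) := by
      intro k
      induction k with
      | zero => simpa using ih
      | succ k ihk =>
        rw [single_add, add_comm (single i k), add_assoc]
        exact single_one_add i _ ihk
    exact key n

theorem Finsupp.forall_mem_support_single_one_add {ι : Type*} {p : ι → Prop} (i : ι)
    (a : ι →₀ ℕ) :
    (∀ j ∈ (single i 1 + a).support, p j) ↔ p i ∧ ∀ j ∈ a.support, p j := by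
  classical
  simp [Finsupp.support_add_eq_union]

section StanleyReisnerIdeal

variable {M ι R : Type*} [CommSemiring R]

abbrev ConeSupported (Sigma : Set (Set M)) (v : ι → M) (a : ι →₀ ℕ) : Prop :=
  ∃ σ ∈ Sigma, ∀ i ∈ a.support, v i ∈ σ

variable (R) in
noncomputable def stanleyReisnerIdeal (Sigma : Set (Set M)) (v : ι → M) :
    Ideal (MvPolynomial ι R) :=
  Ideal.span {f | ∃ s : Finset ι, (¬ ∃ σ ∈ Sigma, ∀ i ∈ s, v i ∈ σ) ∧ f = ∏ i ∈ s, X i}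

theorem monomial_mem_stanleyReisnerIdeal {Sigma : Set (Set M)} {v : ι → M} {a : ι →₀ ℕ}
    (ha : ¬ ConeSupported Sigma v a) : monomial a (1 : R) ∈ stanleyReisnerIdeal R Sigma v := by
  refine Ideal.mem_of_dvd _ ?_ (Ideal.subset_span ⟨a.support, ha, rfl⟩)
  rw [← prod_X_pow_eq_monomial]
  exact Finset.prod_dvd_prod_of_dvd _ _ fun i hi =>
    dvd_pow_self _ (Finsupp.mem_support_iff.mp hi)

end StanleyReisnerIdeal

section Fan

variable {M ι : Type*} [AddCommMonoid M]

abbrev latticeSupport (Sigma : Set (Set M)) (L : AddSubmonoid M) : Set M :=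
  {w | (∃ σ ∈ Sigma, w ∈ σ) ∧ w ∈ L}

structure IsFan (Sigma : Set (Set M)) : Prop where
  zero_mem : ∀ σ ∈ Sigma, (0 : M) ∈ σ
  add_mem : ∀ σ ∈ Sigma, ∀ x ∈ σ, ∀ y ∈ σ, x + y ∈ σ
  mem_of_add_mem : ∀ σ ∈ Sigma, ∀ τ ∈ Sigma, ∀ x ∈ σ, ∀ y ∈ σ, x + y ∈ τ → x ∈ τ ∧ y ∈ τ

def HasUniqueRayExpansion (Sigma : Set (Set M)) (L : AddSubmonoid M) (v : ι → M) : Prop :=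
  ∀ w ∈ latticeSupport Sigma L,
    ∃! a : ι →₀ ℕ, ConeSupported Sigma v a ∧ Finsupp.linearCombination ℕ v a = w

namespace IsFan

variable {Sigma : Set (Set M)} {σ τ : Set M} {v : ι → M} {a : ι →₀ ℕ}

def cone (hfan : IsFan Sigma) (hσ : σ ∈ Sigma) : AddSubmonoid M where
  carrier := σ
  add_mem' {x y} hx hy := hfan.add_mem σ hσ x hx y hy
  zero_mem' := hfan.zero_mem σ hσ

theorem linearCombination_mem (hfan : IsFan Sigma) (hσ : σ ∈ Sigma)
    (ha : ∀ i ∈ a.support, v i ∈ σ) : Finsupp.linearCombination ℕ v a ∈ σ := by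
  rw [Finsupp.linearCombination_apply]
  exact (hfan.cone hσ).sum_mem fun i hi => (hfan.cone hσ).nsmul_mem (x := v i) (ha i hi) _

theorem mem_of_linearCombination_mem (hfan : IsFan Sigma) (hσ : σ ∈ Sigma) (hτ : τ ∈ Sigma)
    (ha : ∀ i ∈ a.support, v i ∈ σ) (haτ : Finsupp.linearCombination ℕ v a ∈ τ) {i : ι}
    (hi : i ∈ a.support) : v i ∈ τ := by
  have hle : Finsupp.single i 1 ≤ a := Finsupp.single_le_iff.mpr
    (Nat.one_le_iff_ne_zero.mpr (Finsupp.mem_support_iff.mp hi))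
  rw [← add_tsub_cancel_of_le hle, map_add, Finsupp.linearCombination_single, one_smul] at haτ
  refine (hfan.mem_of_add_mem σ hσ τ hτ _ (ha i hi) _ ?_ haτ).1
  exact hfan.linearCombination_mem hσ fun j hj => ha j (Finsupp.support_mono tsub_le_self hj)

theorem linearCombination_mem_latticeSupport (hfan : IsFan Sigma) {L : AddSubmonoid M}
    (hv : ∀ i, v i ∈ L) (ha : ConeSupported Sigma v a) :
    Finsupp.linearCombination ℕ v a ∈ latticeSupport Sigma L := by
  obtain ⟨σ, hσ, haσ⟩ := ha
  refine ⟨⟨σ, hσ, hfan.linearCombination_mem hσ haσ⟩, ?_⟩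
  rw [Finsupp.linearCombination_apply]
  exact L.sum_mem fun i _ => L.nsmul_mem (hv i) _

theorem hasUniqueRayExpansion {𝕜 : Type*} [Fintype ι] [Semiring 𝕜] [Module 𝕜 M]
    {L : AddSubmonoid M} (hfan : IsFan Sigma)
    (h : ∀ w ∈ latticeSupport Sigma L, ∃! a : ι → ℕ,
      (∃ σ ∈ Sigma, w ∈ σ ∧ ∀ i, a i ≠ 0 → v i ∈ σ) ∧ w = ∑ i, (a i : 𝕜) • v i) :
    HasUniqueRayExpansion Sigma L v := by
  intro w hw
  refine (Finsupp.equivFunOnFinite.existsUnique_congr fun a => ?_).mpr (h w hw)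
  have hlc : Finsupp.linearCombination ℕ v a = ∑ i, (a i : 𝕜) • v i := by
    simp [Finsupp.linearCombination_apply, Finsupp.sum_fintype, Nat.cast_smul_eq_nsmul]
  simp only [Finsupp.equivFunOnFinite_apply, ← hlc, eq_comm (a := w)]
  constructor
  · rintro ⟨⟨σ, hσ, haσ⟩, rfl⟩
    exact ⟨⟨σ, hσ, hfan.linearCombination_mem hσ haσ,
      fun i hi => haσ i (Finsupp.mem_support_iff.mpr hi)⟩, rfl⟩
  · rintro ⟨⟨σ, hσ, -, haσ⟩, rfl⟩
    exact ⟨⟨σ, hσ, fun i hi => haσ i (Finsupp.mem_support_iff.mp hi)⟩, rfl⟩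

end IsFan

namespace HasUniqueRayExpansion

variable {Sigma : Set (Set M)} {L : AddSubmonoid M} {v : ι → M}
  (hsmooth : HasUniqueRayExpansion Sigma L v)

noncomputable def exponent (u : latticeSupport Sigma L) : ι →₀ ℕ :=
  (hsmooth u u.2).exists.choose

theorem coneSupported_exponent (u : latticeSupport Sigma L) :
    ConeSupported Sigma v (hsmooth.exponent u) :=
  (hsmooth u u.2).exists.choose_spec.1

theorem linearCombination_exponent (u : latticeSupport Sigma L) :
    Finsupp.linearCombination ℕ v (hsmooth.exponent u) = u :=
  (hsmooth u u.2).exists.choose_spec.2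

theorem exponent_eq {a : ι →₀ ℕ} (ha : ConeSupported Sigma v a) (u : latticeSupport Sigma L)
    (hu : (u : M) = Finsupp.linearCombination ℕ v a) : hsmooth.exponent u = a :=
  (hsmooth u u.2).unique (hsmooth u u.2).exists.choose_spec ⟨ha, hu.symm⟩

end HasUniqueRayExpansion

end Fan

section DeformedGroupRing

variable {M ι R D : Type*} [AddCommMonoid M] [CommRing R] [CommRing D] [Algebra R D]
  {Sigma : Set (Set M)} {L : AddSubmonoid M} {v : ι → M}

structure IsDeformedGroupRingBasis (b : Module.Basis (latticeSupport Sigma L) R D) : Prop where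
  mul_of_mem : ∀ u w : latticeSupport Sigma L, (∃ σ ∈ Sigma, (u : M) ∈ σ ∧ (w : M) ∈ σ) →
    ∀ huw : (u : M) + w ∈ latticeSupport Sigma L, b u * b w = b ⟨u + w, huw⟩
  mul_eq_zero : ∀ u w : latticeSupport Sigma L,
    (¬ ∃ σ ∈ Sigma, (u : M) ∈ σ ∧ (w : M) ∈ σ) → b u * b w = 0

variable {b : Module.Basis (latticeSupport Sigma L) R D}

theorem IsDeformedGroupRingBasis.basis_zero_eq_one (hb : IsDeformedGroupRingBasis b)
    (hfan : IsFan Sigma) {σ : Set M} (hσ : σ ∈ Sigma) :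
    b ⟨0, ⟨σ, hσ, hfan.zero_mem σ hσ⟩, L.zero_mem⟩ = 1 := by
  have hmul : LinearMap.mulLeft R (b ⟨0, ⟨σ, hσ, hfan.zero_mem σ hσ⟩, L.zero_mem⟩) =
      LinearMap.id := by
    refine b.ext fun u => ?_
    obtain ⟨τ, hτ, huτ⟩ := u.2.1
    rw [LinearMap.mulLeft_apply,
      hb.mul_of_mem _ u ⟨τ, hτ, hfan.zero_mem τ hτ, huτ⟩ (by simp)]
    simp
  simpa using LinearMap.congr_fun hmul 1

theorem aeval_monomial_of_coneSupported (hb : IsDeformedGroupRingBasis b) (hfan : IsFan Sigma)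
    (hv : ∀ i, v i ∈ latticeSupport Sigma L) {a : ι →₀ ℕ} (ha : ConeSupported Sigma v a) :
    aeval (fun i => b ⟨v i, hv i⟩) (monomial a (1 : R)) =
      b ⟨Finsupp.linearCombination ℕ v a,
        hfan.linearCombination_mem_latticeSupport (fun i => (hv i).2) ha⟩ := by
  obtain ⟨σ, hσ, haσ⟩ := ha
  induction a using Finsupp.induction_single_one with
  | zero =>
    rw [monomial_zero', C_1, map_one, ← hb.basis_zero_eq_one hfan hσ]
    exact congrArg b (Subtype.ext (map_zero _).symm)
  | single_one_add i a ih =>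
    obtain ⟨hi, haσ⟩ := (Finsupp.forall_mem_support_single_one_add i a).mp haσ
    have haσ' := hfan.linearCombination_mem hσ haσ
    have haL := (hfan.linearCombination_mem_latticeSupport (L := L) (fun j => (hv j).2)
      ⟨σ, hσ, haσ⟩).2
    rw [monomial_single_add, pow_one, map_mul, aeval_X, ih haσ, hb.mul_of_mem _ _
      ⟨σ, hσ, hi, haσ'⟩ ⟨⟨σ, hσ, hfan.add_mem σ hσ _ hi _ haσ'⟩, L.add_mem (hv i).2 haL⟩]
    exact congrArg b (Subtype.ext (by simp))

theorem aeval_monomial_of_not_coneSupported (hb : IsDeformedGroupRingBasis b) (hfan : IsFan Sigma)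
    (hv : ∀ i, v i ∈ latticeSupport Sigma L)
    {a : ι →₀ ℕ} (ha : ¬ ConeSupported Sigma v a) :
    aeval (fun i => b ⟨v i, hv i⟩) (monomial a (1 : R)) = 0 := by
  induction a using Finsupp.induction_single_one with
  | zero =>
    -- `0` is cone-supported unless the fan is empty, and then `D = 0`.
    have : IsEmpty (latticeSupport Sigma L) := ⟨fun ⟨_, ⟨σ, hσ, _⟩, _⟩ => ha ⟨σ, hσ, by simp⟩⟩
    have : Subsingleton D := b.repr.toEquiv.subsingleton
    exact Subsingleton.elim _ _
  | single_one_add i a ih =>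
    rw [monomial_single_add, pow_one, map_mul]
    by_cases haS : ConeSupported Sigma v a
    · rw [aeval_X, aeval_monomial_of_coneSupported hb hfan hv haS, hb.mul_eq_zero]
      rintro ⟨τ, hτ, hiτ, haτ⟩
      obtain ⟨σ, hσ, haσ⟩ := haS
      exact ha ⟨τ, hτ, (Finsupp.forall_mem_support_single_one_add i a).mpr
        ⟨hiτ, fun j hj => hfan.mem_of_linearCombination_mem hσ hτ haσ haτ hj⟩⟩
    · rw [ih haS, mul_zero]

theorem stanleyReisnerIdeal_le_ker_aeval (hb : IsDeformedGroupRingBasis b) (hfan : IsFan Sigma)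
    (hv : ∀ i, v i ∈ latticeSupport Sigma L) :
    stanleyReisnerIdeal R Sigma v ≤ RingHom.ker (aeval (R := R) fun i => b ⟨v i, hv i⟩) := by
  classical
  refine Ideal.span_le.mpr ?_
  rintro _ ⟨s, hs, rfl⟩
  have hsupp : ∀ i ∈ s, i ∈ (Finsupp.indicator s fun _ _ => 1).support := fun i hi => by
    simp [Finsupp.indicator_of_mem hi]
  have hprod : ∏ i ∈ s, (X i : MvPolynomial ι R) =
      monomial (Finsupp.indicator s fun _ _ => 1) 1 := by
    simpa using prod_X_pow (R := R) (fun _ => 1) s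
  rw [SetLike.mem_coe, RingHom.mem_ker, hprod]
  exact aeval_monomial_of_not_coneSupported hb hfan hv
    fun ⟨σ, hσ, hσs⟩ => hs ⟨σ, hσ, fun i hi => hσs i (hsupp i hi)⟩

noncomputable def stanleyReisnerAlgHom (hb : IsDeformedGroupRingBasis b) (hfan : IsFan Sigma)
    (hv : ∀ i, v i ∈ latticeSupport Sigma L) :
    (MvPolynomial ι R ⧸ stanleyReisnerIdeal R Sigma v) →ₐ[R] D :=
  Ideal.Quotient.liftₐ _ (aeval fun i => b ⟨v i, hv i⟩)
    fun _ hp => stanleyReisnerIdeal_le_ker_aeval hb hfan hv hp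

theorem stanleyReisnerAlgHom_mk (hb : IsDeformedGroupRingBasis b) (hfan : IsFan Sigma)
    (hv : ∀ i, v i ∈ latticeSupport Sigma L) (p : MvPolynomial ι R) :
    stanleyReisnerAlgHom hb hfan hv (Ideal.Quotient.mk _ p) =
      aeval (fun i => b ⟨v i, hv i⟩) p :=
  Ideal.Quotient.liftₐ_apply _ _ _ _

noncomputable def stanleyReisnerInv (b : Module.Basis (latticeSupport Sigma L) R D)
    (hsmooth : HasUniqueRayExpansion Sigma L v) :
    D →ₗ[R] MvPolynomial ι R ⧸ stanleyReisnerIdeal R Sigma v :=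
  b.constr R fun u => Ideal.Quotient.mk _ (monomial (hsmooth.exponent u) 1)

theorem stanleyReisnerAlgHom_inv (hb : IsDeformedGroupRingBasis b) (hfan : IsFan Sigma)
    (hv : ∀ i, v i ∈ latticeSupport Sigma L) (hsmooth : HasUniqueRayExpansion Sigma L v)
    (y : D) :
    stanleyReisnerAlgHom hb hfan hv (stanleyReisnerInv b hsmooth y) = y := by
  suffices (stanleyReisnerAlgHom hb hfan hv).toLinearMap ∘ₗ stanleyReisnerInv b hsmooth =
      LinearMap.id from LinearMap.congr_fun this y
  refine b.ext fun u => ?_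
  rw [LinearMap.comp_apply, stanleyReisnerInv, b.constr_basis, AlgHom.toLinearMap_apply,
    stanleyReisnerAlgHom_mk,
    aeval_monomial_of_coneSupported hb hfan hv (hsmooth.coneSupported_exponent u)]
  exact congrArg b (Subtype.ext (hsmooth.linearCombination_exponent u))

theorem stanleyReisnerInv_algHom (hb : IsDeformedGroupRingBasis b) (hfan : IsFan Sigma)
    (hv : ∀ i, v i ∈ latticeSupport Sigma L) (hsmooth : HasUniqueRayExpansion Sigma L v)
    (x : MvPolynomial ι R ⧸ stanleyReisnerIdeal R Sigma v) :
    stanleyReisnerInv b hsmooth (stanleyReisnerAlgHom hb hfan hv x) = x := by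
  obtain ⟨p, rfl⟩ := Ideal.Quotient.mk_surjective x
  suffices stanleyReisnerInv b hsmooth ∘ₗ (stanleyReisnerAlgHom hb hfan hv).toLinearMap ∘ₗ
      (Ideal.Quotient.mkₐ R _).toLinearMap = (Ideal.Quotient.mkₐ R _).toLinearMap from
    LinearMap.congr_fun this p
  refine (basisMonomials ι R).ext fun a => ?_
  simp only [coe_basisMonomials, LinearMap.comp_apply, AlgHom.toLinearMap_apply,
    Ideal.Quotient.mkₐ_eq_mk, stanleyReisnerAlgHom_mk]
  by_cases ha : ConeSupported Sigma v a
  · rw [aeval_monomial_of_coneSupported hb hfan hv ha, stanleyReisnerInv, b.constr_basis,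
      hsmooth.exponent_eq ha _ rfl]
  · rw [aeval_monomial_of_not_coneSupported hb hfan hv ha, map_zero, eq_comm,
      Ideal.Quotient.eq_zero_iff_mem]
    exact monomial_mem_stanleyReisnerIdeal ha

noncomputable def stanleyReisnerEquiv (hb : IsDeformedGroupRingBasis b) (hfan : IsFan Sigma)
    (hv : ∀ i, v i ∈ latticeSupport Sigma L) (hsmooth : HasUniqueRayExpansion Sigma L v) :
    (MvPolynomial ι R ⧸ stanleyReisnerIdeal R Sigma v) ≃ₐ[R] D :=
  AlgEquiv.ofBijective (stanleyReisnerAlgHom hb hfan hv)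
    ⟨Function.LeftInverse.injective (stanleyReisnerInv_algHom hb hfan hv hsmooth),
      Function.RightInverse.surjective (stanleyReisnerAlgHom_inv hb hfan hv hsmooth)⟩

theorem stanleyReisnerEquiv_mk_X (hb : IsDeformedGroupRingBasis b) (hfan : IsFan Sigma)
    (hv : ∀ i, v i ∈ latticeSupport Sigma L) (hsmooth : HasUniqueRayExpansion Sigma L v)
    (i : ι) :
    stanleyReisnerEquiv hb hfan hv hsmooth (Ideal.Quotient.mk _ (X i)) = b ⟨v i, hv i⟩ :=
  (stanleyReisnerAlgHom_mk hb hfan hv (X i)).trans (aeval_X _ i)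

end DeformedGroupRing

theorem stmt10_general (d r : ℕ) (L : AddSubgroup (Fin d → ℝ))
    (Sigma : Finset (Set (Fin d → ℝ)))
    (h0 : ∀ σ ∈ Sigma, (0 : Fin d → ℝ) ∈ σ)
    (hadd : ∀ σ ∈ Sigma, ∀ x ∈ σ, ∀ y ∈ σ, x + y ∈ σ)
    (hface : ∀ σ ∈ Sigma, ∀ τ ∈ Sigma, ∀ x ∈ σ, ∀ y ∈ σ, x + y ∈ τ → x ∈ τ ∧ y ∈ τ)
    (v : Fin r → (Fin d → ℝ))
    (hrays : ∀ i, (∃ σ ∈ Sigma, v i ∈ σ) ∧ v i ∈ L)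
    (hsmooth : ∀ w : Fin d → ℝ, ((∃ σ ∈ Sigma, w ∈ σ) ∧ w ∈ L) →
      ∃! a : Fin r → ℕ,
        (∃ σ ∈ Sigma, w ∈ σ ∧ ∀ i, a i ≠ 0 → v i ∈ σ) ∧
        w = ∑ i, (a i : ℝ) • v i)
    (D : Type*) [CommRing D]
    (b : Module.Basis {w : Fin d → ℝ // (∃ σ ∈ Sigma, w ∈ σ) ∧ w ∈ L} ℤ D)
    (hb : ∀ u w : {w : Fin d → ℝ // (∃ σ ∈ Sigma, w ∈ σ) ∧ w ∈ L},
      (∀ _h : ∃ σ ∈ Sigma, (u : Fin d → ℝ) ∈ σ ∧ (w : Fin d → ℝ) ∈ σ,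
        ∀ huw : (∃ σ ∈ Sigma, (u : Fin d → ℝ) + w ∈ σ) ∧ (u : Fin d → ℝ) + w ∈ L,
          b u * b w = b ⟨(u : Fin d → ℝ) + w, huw⟩) ∧
      ((¬ ∃ σ ∈ Sigma, (u : Fin d → ℝ) ∈ σ ∧ (w : Fin d → ℝ) ∈ σ) → b u * b w = 0)) :
    (∃ e : (MvPolynomial (Fin r) ℤ ⧸
        Ideal.span { f : MvPolynomial (Fin r) ℤ | ∃ s : Finset (Fin r),
          (¬ ∃ σ ∈ Sigma, ∀ i ∈ s, v i ∈ σ) ∧ f = ∏ i ∈ s, X i }) ≃+* D,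
      ∀ i, e (Ideal.Quotient.mk _ (X i)) = b ⟨v i, hrays i⟩) ∧
    Nonempty (Module.Basis {w : Fin d → ℝ // (∃ σ ∈ Sigma, w ∈ σ) ∧ w ∈ L} ℤ
      (MvPolynomial (Fin r) ℤ ⧸
        Ideal.span { f : MvPolynomial (Fin r) ℤ | ∃ s : Finset (Fin r),
          (¬ ∃ σ ∈ Sigma, ∀ i ∈ s, v i ∈ σ) ∧ f = ∏ i ∈ s, X i })) := by
  have hfan : IsFan (Sigma : Set (Set (Fin d → ℝ))) := ⟨h0, hadd, hface⟩
  have hdeformed : IsDeformedGroupRingBasis (L := L.toAddSubmonoid) b :=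
    ⟨fun u w => (hb u w).1, fun u w => (hb u w).2⟩
  have hunique : HasUniqueRayExpansion (Sigma : Set (Set (Fin d → ℝ))) L.toAddSubmonoid v :=
    hfan.hasUniqueRayExpansion (𝕜 := ℝ) hsmooth
  let e := stanleyReisnerEquiv hdeformed hfan hrays hunique
  exact ⟨⟨e.toRingEquiv, stanleyReisnerEquiv_mk_X hdeformed hfan hrays hunique⟩,
    ⟨b.map e.symm.toLinearEquiv⟩⟩

/-- let `Σ` be a smooth fan in a lattice `L ⊆ ℝ^d`, with primitive ray
generators `v_1, …, v_r` (smoothness is encoded by `hsmooth`: every lattice point of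
`|Σ| ∩ L` is uniquely a nonnegative integer combination of the ray generators lying in a
cone containing it).  Let `D` be the deformed group ring `ℤ[N]^Σ`, presented by a
`ℤ`-basis `b` indexed by `|Σ| ∩ L` with `b_u · b_v = b_{u+v}` if `u, v` lie in a common
cone of `Σ` and `0` otherwise.  Then the map `x_{i} ↦ y^{v_i}` induces a ring
isomorphism from the Stanley–Reisner ring
`SR(Σ) = ℤ[x_1,…,x_r]/(x_{i_1}⋯x_{i_s} : v_{i_1},…,v_{i_s} do not span a cone of Σ)`
onto `ℤ[N]^Σ`; in particular `SR(Σ)` has a `ℤ`-basis indexed by the lattice points of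
`|Σ| ∩ L`. -/
theorem stmt10 (d r : ℕ) (L : AddSubgroup (Fin d → ℝ))
    (Sigma : Finset (Set (Fin d → ℝ)))
    (h0 : ∀ σ ∈ Sigma, (0 : Fin d → ℝ) ∈ σ)
    (hadd : ∀ σ ∈ Sigma, ∀ x ∈ σ, ∀ y ∈ σ, x + y ∈ σ)
    (hconv : ∀ σ ∈ Sigma, ∀ x ∈ σ, -x ∈ σ → x = 0)
    (hface : ∀ σ ∈ Sigma, ∀ τ ∈ Sigma, ∀ x ∈ σ, ∀ y ∈ σ, x + y ∈ τ → x ∈ τ ∧ y ∈ τ)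
    (v : Fin r → (Fin d → ℝ))
    (hrays : ∀ i, (∃ σ ∈ Sigma, v i ∈ σ) ∧ v i ∈ L)
    (hsmooth : ∀ w : Fin d → ℝ, ((∃ σ ∈ Sigma, w ∈ σ) ∧ w ∈ L) →
      ∃! a : Fin r → ℕ,
        (∃ σ ∈ Sigma, w ∈ σ ∧ ∀ i, a i ≠ 0 → v i ∈ σ) ∧
        w = ∑ i, (a i : ℝ) • v i)
    (D : Type*) [CommRing D]
    (b : Module.Basis {w : Fin d → ℝ // (∃ σ ∈ Sigma, w ∈ σ) ∧ w ∈ L} ℤ D)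
    (hb : ∀ u w : {w : Fin d → ℝ // (∃ σ ∈ Sigma, w ∈ σ) ∧ w ∈ L},
      (∀ _h : ∃ σ ∈ Sigma, (u : Fin d → ℝ) ∈ σ ∧ (w : Fin d → ℝ) ∈ σ,
        ∀ huw : (∃ σ ∈ Sigma, (u : Fin d → ℝ) + w ∈ σ) ∧ (u : Fin d → ℝ) + w ∈ L,
          b u * b w = b ⟨(u : Fin d → ℝ) + w, huw⟩) ∧
      ((¬ ∃ σ ∈ Sigma, (u : Fin d → ℝ) ∈ σ ∧ (w : Fin d → ℝ) ∈ σ) → b u * b w = 0)) :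
    (∃ e : (MvPolynomial (Fin r) ℤ ⧸
        Ideal.span { f : MvPolynomial (Fin r) ℤ | ∃ s : Finset (Fin r),
          (¬ ∃ σ ∈ Sigma, ∀ i ∈ s, v i ∈ σ) ∧ f = ∏ i ∈ s, X i }) ≃+* D,
      ∀ i, e (Ideal.Quotient.mk _ (X i)) = b ⟨v i, hrays i⟩) ∧
    Nonempty (Module.Basis {w : Fin d → ℝ // (∃ σ ∈ Sigma, w ∈ σ) ∧ w ∈ L} ℤ
      (MvPolynomial (Fin r) ℤ ⧸
        Ideal.span { f : MvPolynomial (Fin r) ℤ | ∃ s : Finset (Fin r),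
          (¬ ∃ σ ∈ Sigma, ∀ i ∈ s, v i ∈ σ) ∧ f = ∏ i ∈ s, X i })) :=
  stmt10_general d r L Sigma h0 hadd hface v hrays hsmooth D b hb
end

section
/- Fix nonnegative integers m_1, ..., m_n with associated partition λ_i = m_i + m_{i+1} + ... + m_n. Every n × n matrix A over C[[t]] whose determinant has t-adic valuation λ_1 + ... + λ_n, and for which for each r the (n+1−r) × (n+1−r) minors on the first n+1−r columns have minimal valuation exactly λ_r (contact order condition Cont^λ(V_•)), can be transformed by left multiplication by an element of GL_n(C[[t]]) into a unique upper-triangular matrix whose (i,i)-entry is t^{m_{n+1−i}} and whose (i,j)-entry for i < j is a polynomial in t of degree strictly less than m_{n+1−j}. -/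
/-!
Over the discrete valuation ring `K⟦X⟧`, row operations bring any matrix with nonzero
determinant to upper triangular form with diagonal entries `X ^ d i`: in each column a pivot of
least order divides all the other entries. Working through the columns from left to right, the
entries above each diagonal entry `X ^ d j` can then be reduced modulo `X ^ d j` without
disturbing the earlier columns.

Left multiplication by `GL` does not change which `c` bound from below the orders of the maximal
minors of a matrix, because by multilinearity of the determinant each minor of `G * M` is a
combination of minors of `M`. For the triangular form, the least order of a maximal minor of the
first `k` columns is `d 0 + ⋯ + d (k - 1)`, so the contact orders `λ_r` determine these partial
sums and force `d i = m i.rev`.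

Uniqueness: if `G * B = B'` for two reduced forms with the same diagonal, then `G - 1` vanishes
column by column, since `X ^ d j * (G - 1) i j` is the `(i, j)` entry of `B' - B`, which has no
coefficients in degrees `≥ d j`.
-/

open Matrix PowerSeries

/-- `λ_r = m_r + m_{r+1} + ⋯ + m_n` (0-indexed). -/
def lamOf {n : ℕ} (m : Fin n → ℕ) (r : Fin n) : ℕ :=
  ∑ i ∈ Finset.univ.filter (fun i => r ≤ i), m i

lemma Finset.eq_of_forall_sum_Iic_eq {α M : Type*} [LinearOrder α] [LocallyFiniteOrderBot α]
    [WellFoundedLT α] [AddCancelCommMonoid M] {f g : α → M}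
    (h : ∀ j, ∑ i ∈ Iic j, f i = ∑ i ∈ Iic j, g i) : f = g := by
  funext j
  induction j using WellFoundedLT.induction with
  | _ j ih =>
  have hj := h j
  rw [← Iio_insert, sum_insert notMem_Iio_self, sum_insert notMem_Iio_self,
    sum_congr rfl fun i hi => ih i (mem_Iio.mp hi)] at hj
  exact add_right_cancel hj

lemma Fin.sum_univ_castLE_eq_sum_Iic {M : Type*} [AddCommMonoid M] {n k : ℕ} (f : Fin n → M)
    (hk : k ≤ n) (j : Fin n) (hj : k = j + 1) :
    ∑ i : Fin k, f (Fin.castLE hk i) = ∑ i ∈ Finset.Iic j, f i := by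
  refine (Finset.sum_map _ (Fin.castLEEmb hk) f).symm.trans (Finset.sum_congr ?_ fun _ _ => rfl)
  ext i
  simp only [Finset.mem_map, Finset.mem_univ, true_and, Fin.coe_castLEEmb, Finset.mem_Iic]
  constructor
  · rintro ⟨a, rfl⟩
    rw [Fin.le_def, Fin.val_castLE]
    omega
  · intro hi
    exact ⟨⟨i.val, by rw [Fin.le_def] at hi; omega⟩, rfl⟩

lemma lamOf_eq_sum_Iic_rev {n : ℕ} (m : Fin n → ℕ) (r : Fin n) :
    lamOf m r = ∑ i ∈ Finset.Iic r.rev, m i.rev := by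
  rw [lamOf, Finset.filter_le_eq_Ici, ← Fin.map_revPerm_Ici, Finset.sum_map]
  simp

variable {R : Type*} [CommRing R] {K : Type*} [Field K] {n : ℕ}

namespace PowerSeries

lemma le_order_sum {ι : Type*} (s : Finset ι) (f : ι → R⟦X⟧) {c : ℕ∞}
    (h : ∀ i ∈ s, c ≤ order (f i)) : c ≤ order (∑ i ∈ s, f i) :=
  le_order _ _ fun l hl => by
    rw [map_sum]
    exact Finset.sum_eq_zero fun i hi => coeff_of_lt_order l (hl.trans_le (h i hi))

lemma eq_zero_of_coeff_X_pow_mul_eq_zero {k : ℕ} {f : R⟦X⟧}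
    (h : ∀ l, k ≤ l → coeff l (X ^ k * f) = 0) : f = 0 := by
  ext l
  simpa using h (l + k) (Nat.le_add_left k l)

lemma exists_eq_X_pow_smul_of_ne_zero {ι : Type*} [Fintype ι] {w : ι → K⟦X⟧} (hw : w ≠ 0) :
    ∃ (v : ℕ) (c : ι → K⟦X⟧) (i₁ : ι), IsUnit (c i₁) ∧ w = (X : K⟦X⟧) ^ v • c := by
  obtain ⟨i, hi : w i ≠ 0⟩ := Function.ne_iff.mp hw
  obtain ⟨i₁, -, hmin⟩ := Finset.exists_min_image Finset.univ (fun i => order (w i)) ⟨i, by simp⟩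
  have hi₁ : w i₁ ≠ 0 := fun h =>
    hi (order_eq_top.mp (top_unique (by simpa [h] using hmin i (Finset.mem_univ i))))
  set v := (w i₁).order.toNat
  have hv : coeff v (w i₁) ≠ 0 := coeff_order hi₁
  have hdvd : ∀ i, X ^ v ∣ w i := fun i => X_pow_dvd_iff.mpr fun l hl =>
    coeff_of_lt_order l ((ENat.natCast_lt_natCast.mpr hl).trans_le
      ((ENat.natCast_toNat (order_eq_top.not.mpr hi₁)).trans_le (hmin i (by simp))))
  choose c hc using hdvd
  refine ⟨v, c, i₁, ?_, funext hc⟩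
  rw [hc i₁, coeff_X_pow_mul', if_pos le_rfl, Nat.sub_self] at hv
  rwa [isUnit_iff_constantCoeff, isUnit_iff_ne_zero, ← coeff_zero_eq_constantCoeff_apply]

end PowerSeries

namespace Matrix

lemma det_mul_eq_sum_prod_mul_det_submatrix {κ ι : Type*} [Fintype κ] [DecidableEq κ]
    [Fintype ι] (G : Matrix κ ι R) (M : Matrix ι κ R) :
    (G * M).det = ∑ p : κ → ι, (∏ i, G i (p i)) * (M.submatrix p id).det := by
  have hrows : G * M = Matrix.of fun i => ∑ j, G i j • M j := by
    ext i c
    simp [mul_apply, Finset.sum_apply]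
  rw [hrows]
  change (detRowAlternating : (κ → R) [⋀^κ]→ₗ[R] R).toMultilinearMap
    (fun i => ∑ j, G i j • M j) = _
  rw [MultilinearMap.map_sum]
  refine Finset.sum_congr rfl fun p _ => ?_
  rw [MultilinearMap.map_smul_univ]
  rfl

lemma exists_GL_mulVec_eq_single_one {ι : Type*} [Fintype ι] [DecidableEq ι] {c : ι → R}
    {i₁ : ι} (hc : IsUnit (c i₁)) (i₀ : ι) :
    ∃ g : GL ι R, (g : Matrix ι ι R) *ᵥ c = Pi.single i₀ 1 := by
  -- `H` sends `Pi.single i₁ 1` to `c`, and Cramer's rule gives `H.det = c i₁`.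
  set H : Matrix ι ι R := updateCol 1 i₁ c
  have hH : IsUnit H := by
    rwa [isUnit_iff_isUnit_det, ← cramer_apply, cramer_one]
  have hHc : (hH.unit : Matrix ι ι R) *ᵥ Pi.single i₁ 1 = c := by
    ext i
    simp [H]
  refine ⟨GeneralLinearGroup.swap R i₀ i₁ * hH.unit⁻¹, ?_⟩
  rw [← hHc, mulVec_mulVec, Units.val_mul, Matrix.mul_assoc, Units.inv_mul, Matrix.mul_one]
  change Matrix.swap R i₀ i₁ *ᵥ _ = _
  ext i
  simp only [swap_mulVec, Function.comp_apply, Pi.single_apply, Equiv.swap_apply_eq_iff,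
    Equiv.swap_apply_right]

lemma exists_GL_mulVec_eq_single_X_pow {ι : Type*} [Fintype ι] [DecidableEq ι]
    {w : ι → K⟦X⟧} (hw : w ≠ 0) (i₀ : ι) :
    ∃ (g : GL ι K⟦X⟧) (v : ℕ), (g : Matrix ι ι K⟦X⟧) *ᵥ w = Pi.single i₀ (X ^ v) := by
  obtain ⟨v, c, i₁, hc, rfl⟩ := PowerSeries.exists_eq_X_pow_smul_of_ne_zero hw
  obtain ⟨g, hg⟩ := exists_GL_mulVec_eq_single_one hc i₀
  refine ⟨g, v, ?_⟩
  rw [mulVec_smul, hg]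
  ext i
  simp [Pi.single_apply]

/-- The block diagonal matrix with blocks `1` and `M`. -/
def blockOneHom : Matrix (Fin n) (Fin n) R →* Matrix (Fin (n + 1)) (Fin (n + 1)) R where
  toFun M := Matrix.of fun i j => Fin.cases (Fin.cases 1 0 j) (fun i' => Fin.cases 0 (M i') j) i
  map_one' := by
    ext i j
    cases i using Fin.cases <;> cases j using Fin.cases <;>
      simp [one_apply, Fin.succ_ne_zero, (Fin.succ_ne_zero _).symm]
  map_mul' M N := by
    ext i j
    cases i using Fin.cases <;> cases j using Fin.cases <;> simp [mul_apply, Fin.sum_univ_succ]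

@[simp]
lemma blockOneHom_mul_apply_zero (M : Matrix (Fin n) (Fin n) R)
    (N : Matrix (Fin (n + 1)) (Fin (n + 1)) R) (j : Fin (n + 1)) :
    (blockOneHom M * N) 0 j = N 0 j := by
  simp [blockOneHom, mul_apply, Fin.sum_univ_succ]

@[simp]
lemma blockOneHom_mul_apply_succ (M : Matrix (Fin n) (Fin n) R)
    (N : Matrix (Fin (n + 1)) (Fin (n + 1)) R) (i : Fin n) (j : Fin (n + 1)) :
    (blockOneHom M * N) i.succ j = (M * N.submatrix Fin.succ id) i j := by
  simp [blockOneHom, mul_apply, Fin.sum_univ_succ]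

theorem exists_GL_mul_isUpperTriangular :
    ∀ {n : ℕ} (A : Matrix (Fin n) (Fin n) K⟦X⟧), A.det ≠ 0 →
      ∃ (g : GL (Fin n) K⟦X⟧) (d : Fin n → ℕ),
        ((g : Matrix (Fin n) (Fin n) K⟦X⟧) * A).IsUpperTriangular ∧
        ∀ i, ((g : Matrix (Fin n) (Fin n) K⟦X⟧) * A) i i = X ^ d i
  | 0, _, _ => ⟨1, finZeroElim, fun i => i.elim0, fun i => i.elim0⟩
  | n + 1, A, hA => by
    have hcol : (fun i => A i 0) ≠ 0 := fun h => hA (det_eq_zero_of_column_eq_zero 0 (congrFun h))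
    obtain ⟨g₁, v, hg₁⟩ := exists_GL_mulVec_eq_single_X_pow hcol 0
    set A₁ := (g₁ : Matrix (Fin (n + 1)) (Fin (n + 1)) K⟦X⟧) * A with hA₁
    have hA₁col : ∀ i, A₁ i 0 = (Pi.single 0 (X ^ v) : Fin (n + 1) → K⟦X⟧) i := congrFun hg₁
    have hA₁det : A₁.det = X ^ v * (A₁.submatrix Fin.succ Fin.succ).det := by
      simp [det_succ_column_zero, Fin.sum_univ_succ, hA₁col]
    have hC : (A₁.submatrix Fin.succ Fin.succ).det ≠ 0 := by
      have hA₁ne : A₁.det ≠ 0 := by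
        rw [hA₁, det_mul]
        exact mul_ne_zero (g₁.isUnit.map detMonoidHom).ne_zero hA
      exact right_ne_zero_of_mul (hA₁det ▸ hA₁ne)
    obtain ⟨h, d, htri, hdiag⟩ := exists_GL_mul_isUpperTriangular _ hC
    refine ⟨Units.map blockOneHom h * g₁, Fin.cons v d, ?_, ?_⟩
    all_goals rw [Units.val_mul, Matrix.mul_assoc, Units.coe_map, ← hA₁]
    · intro i j hji
      cases i using Fin.cases with
      | zero => exact absurd hji (Fin.not_lt_zero j)
      | succ i =>
        rw [blockOneHom_mul_apply_succ]
        cases j using Fin.cases with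
        | zero => simp [mul_apply, hA₁col]
        | succ j => exact htri (Fin.succ_lt_succ_iff.mp hji)
    · intro i
      cases i using Fin.cases with
      | zero => simp [hA₁col]
      | succ i =>
        rw [blockOneHom_mul_apply_succ]
        exact hdiag i

lemma IsUpperTriangular.mul_apply_of_forall_lt {ι : Type*} [Fintype ι] [LinearOrder ι]
    {N B : Matrix ι ι R} (hB : B.IsUpperTriangular) {i j : ι} (hN : ∀ k < j, N i k = 0) :
    (N * B) i j = N i j * B j j := by
  rw [mul_apply, Finset.sum_eq_single j _ (by simp)]
  intro k _ hkj
  rcases lt_or_gt_of_ne hkj with h | h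
  · rw [hN k h, zero_mul]
  · rw [hB h, mul_zero]

lemma IsUpperTriangular.submatrix_castLE_eq_mul {B : Matrix (Fin n) (Fin n) R}
    (hB : B.IsUpperTriangular) {k : ℕ} (hk : k ≤ n) :
    B.submatrix id (Fin.castLE hk) =
      (1 : Matrix (Fin n) (Fin n) R).submatrix id (Fin.castLE hk) *
        B.submatrix (Fin.castLE hk) (Fin.castLE hk) := by
  ext i j
  simp only [submatrix_apply, id, mul_apply, one_apply, ite_mul, one_mul, zero_mul]
  by_cases hi : i.val < k
  · obtain ⟨i, rfl⟩ : ∃ a, Fin.castLE hk a = i := ⟨⟨i, hi⟩, rfl⟩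
    simp [Fin.castLE_inj]
  · rw [Finset.sum_eq_zero fun a _ => if_neg fun h : i = Fin.castLE hk a => hi (h ▸ a.isLt)]
    exact hB (show Fin.castLE hk j < i by rw [Fin.lt_def, Fin.val_castLE]; omega)

section MaximalMinors

variable {ι κ : Type*} [Fintype ι] [Fintype κ] [DecidableEq κ]

def maximalMinorOrders (M : Matrix ι κ R⟦X⟧) : Set ℕ∞ :=
  Set.range fun s : κ ↪ ι => order (M.submatrix s id).det

lemma lowerBounds_maximalMinorOrders_subset_mul (G : Matrix ι ι R⟦X⟧) (M : Matrix ι κ R⟦X⟧) :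
    lowerBounds M.maximalMinorOrders ⊆ lowerBounds (G * M).maximalMinorOrders := by
  rintro c hc _ ⟨s, rfl⟩
  dsimp only
  rw [submatrix_mul _ _ _ _ _ Function.bijective_id, submatrix_id_id,
    det_mul_eq_sum_prod_mul_det_submatrix]
  refine le_order_sum _ _ fun p _ => ?_
  by_cases hp : Function.Injective p
  · exact (hc ⟨⟨p, hp⟩, rfl⟩).trans (le_add_self.trans (le_order_mul _ _))
  · obtain ⟨a, b, hab, hne⟩ := Function.not_injective_iff.mp hp
    rw [det_zero_of_row_eq hne (by ext; simp [hab]), mul_zero, order_zero]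
    exact le_top

lemma lowerBounds_maximalMinorOrders_GL_mul [DecidableEq ι] (g : GL ι R⟦X⟧)
    (M : Matrix ι κ R⟦X⟧) :
    lowerBounds ((g : Matrix ι ι R⟦X⟧) * M).maximalMinorOrders =
      lowerBounds M.maximalMinorOrders := by
  refine subset_antisymm ?_ (lowerBounds_maximalMinorOrders_subset_mul _ M)
  simpa [← Matrix.mul_assoc] using
    lowerBounds_maximalMinorOrders_subset_mul (g⁻¹ : GL ι R⟦X⟧).1 ((g : Matrix ι ι R⟦X⟧) * M)

end MaximalMinors

lemma IsUpperTriangular.isLeast_maximalMinorOrders_submatrix_castLE [Nontrivial R]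
    {B : Matrix (Fin n) (Fin n) R⟦X⟧} (hB : B.IsUpperTriangular) {d : Fin n → ℕ}
    (hdiag : ∀ i, B i i = X ^ d i) {k : ℕ} (hk : k ≤ n) :
    IsLeast (B.submatrix id (Fin.castLE hk)).maximalMinorOrders
      ((∑ i : Fin k, d (Fin.castLE hk i) : ℕ) : ℕ∞) := by
  have htop : order (B.submatrix (Fin.castLE hk) (Fin.castLE hk)).det =
      ((∑ i : Fin k, d (Fin.castLE hk i) : ℕ) : ℕ∞) := by
    rw [det_of_isUpperTriangular (M := B.submatrix _ _) fun i j hij => hB (by simpa using hij)]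
    simp only [submatrix_apply, hdiag, Finset.prod_pow_eq_pow_sum, order_X_pow]
  refine ⟨⟨Fin.castLEEmb hk, htop⟩, ?_⟩
  rintro _ ⟨s, rfl⟩
  dsimp only
  rw [hB.submatrix_castLE_eq_mul hk, submatrix_mul _ _ _ _ _ Function.bijective_id,
    submatrix_id_id, det_mul, ← htop]
  exact le_add_self.trans (le_order_mul _ _)

def IsHermiteForm (B : Matrix (Fin n) (Fin n) R⟦X⟧) (d : Fin n → ℕ) : Prop :=
  B.IsUpperTriangular ∧ (∀ i, B i i = X ^ d i) ∧
    ∀ i j, i < j → ∀ l, d j ≤ l → coeff l (B i j) = 0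

lemma IsUpperTriangular.exists_GL_mul_reduce_column {B : Matrix (Fin n) (Fin n) R⟦X⟧}
    (hB : B.IsUpperTriangular) {d : Fin n → ℕ} (hdiag : ∀ i, B i i = X ^ d i) (K : Fin n) :
    ∃ g : GL (Fin n) R⟦X⟧,
      (∀ i j, ¬(i < K ∧ K ≤ j) → ((g : Matrix (Fin n) (Fin n) R⟦X⟧) * B) i j = B i j) ∧
      ∀ i < K, ∀ l, d K ≤ l → coeff l (((g : Matrix (Fin n) (Fin n) R⟦X⟧) * B) i K) = 0 := by
  set u : Fin n → R⟦X⟧ := fun i => if i < K then -mk fun l => coeff (l + d K) (B i K) else 0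
  set T : Matrix (Fin n) (Fin n) R⟦X⟧ := 1 + vecMulVec u (Pi.single K 1)
  have hT : IsUnit T := by
    rw [isUnit_iff_isUnit_det]
    simp [T, vecMulVec_eq Unit, det_one_add_replicateCol_mul_replicateRow, u]
  have hTB : ∀ i j, (T * B) i j = B i j + u i * B K j := by
    intro i j
    simp [T, Matrix.add_mul, vecMulVec_mul, vecMulVec_apply]
  refine ⟨hT.unit, fun i j hij => ?_, fun i hi l hl => ?_⟩
  · rw [hT.unit_spec, hTB]
    by_cases hiK : i < K
    · rw [hB (lt_of_not_ge fun h => hij ⟨hiK, h⟩), mul_zero, add_zero]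
    · simp [u, hiK]
  · rw [hT.unit_spec, hTB, hdiag]
    have hsplit := eq_shift_mul_X_pow_add_trunc (d K) (B i K)
    rw [show u i = -mk fun l => coeff (l + d K) (B i K) from if_pos hi, neg_mul,
      ← sub_eq_add_neg, sub_eq_of_eq_add' hsplit, Polynomial.coeff_coe, coeff_trunc,
      if_neg (not_lt.mpr hl)]

theorem IsUpperTriangular.exists_isHermiteForm_GL_mul {B : Matrix (Fin n) (Fin n) R⟦X⟧}
    (hB : B.IsUpperTriangular) {d : Fin n → ℕ} (hdiag : ∀ i, B i i = X ^ d i) :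
    ∃ g : GL (Fin n) R⟦X⟧, IsHermiteForm ((g : Matrix (Fin n) (Fin n) R⟦X⟧) * B) d := by
  suffices h : ∀ k, ∃ g : GL (Fin n) R⟦X⟧,
      ((g : Matrix (Fin n) (Fin n) R⟦X⟧) * B).IsUpperTriangular ∧
      (∀ i, ((g : Matrix (Fin n) (Fin n) R⟦X⟧) * B) i i = X ^ d i) ∧
      ∀ i j, i < j → j.val < k → ∀ l, d j ≤ l →
        coeff l (((g : Matrix (Fin n) (Fin n) R⟦X⟧) * B) i j) = 0 by
    obtain ⟨g, hg⟩ := h n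
    exact ⟨g, hg.1, hg.2.1, fun i j hij => hg.2.2 i j hij j.isLt⟩
  intro k
  induction k with
  | zero => exact ⟨1, by simpa using hB, by simpa using hdiag, by simp⟩
  | succ k ih =>
    obtain ⟨g, hgtri, hgdiag, hgred⟩ := ih
    by_cases hk : k < n
    swap
    · exact ⟨g, hgtri, hgdiag, fun i j hij _ => hgred i j hij (by omega)⟩
    obtain ⟨g', hg'fix, hg'red⟩ := hgtri.exists_GL_mul_reduce_column hgdiag ⟨k, hk⟩
    refine ⟨g' * g, fun i j hji => ?_, fun i => ?_, fun i j hij hj l hl => ?_⟩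
    all_goals rw [Units.val_mul, Matrix.mul_assoc]
    · rw [hg'fix _ _ (by grind), hgtri hji]
    · rw [hg'fix _ _ (by grind), hgdiag]
    · rcases Nat.lt_succ_iff_lt_or_eq.mp hj with hj | hj
      · rw [hg'fix _ _ (by grind)]
        exact hgred i j hij hj l hl
      · obtain rfl : j = ⟨k, hk⟩ := Fin.ext hj
        exact hg'red i hij l hl

theorem exists_isHermiteForm_GL_mul (A : Matrix (Fin n) (Fin n) K⟦X⟧) (hA : A.det ≠ 0) :
    ∃ (g : GL (Fin n) K⟦X⟧) (d : Fin n → ℕ),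
      IsHermiteForm ((g : Matrix (Fin n) (Fin n) K⟦X⟧) * A) d := by
  obtain ⟨g₁, d, htri, hdiag⟩ := exists_GL_mul_isUpperTriangular A hA
  obtain ⟨g₂, hg₂⟩ := htri.exists_isHermiteForm_GL_mul hdiag
  exact ⟨g₂ * g₁, d, by rwa [Units.val_mul, Matrix.mul_assoc]⟩

theorem IsHermiteForm.eq_of_mul_eq {B B' G : Matrix (Fin n) (Fin n) R⟦X⟧} {d : Fin n → ℕ}
    (hB : IsHermiteForm B d) (hB' : IsHermiteForm B' d) (hG : G * B = B') : B' = B := by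
  have hdiff : ∀ i j, ∀ l, d j ≤ l → coeff l ((B' - B) i j) = 0 := by
    intro i j l hl
    rcases lt_trichotomy i j with h | rfl | h
    · simp [hB.2.2 i j h l hl, hB'.2.2 i j h l hl]
    · simp [hB.2.1, hB'.2.1]
    · simp [hB.1 h, hB'.1 h]
  have hN : ∀ j i, (G - 1) i j = 0 := by
    intro j
    induction j using WellFoundedLT.induction with
    | _ j ih =>
    intro i
    have hcol : (B' - B) i j = X ^ d j * (G - 1) i j := by
      rw [← hG, ← hB.2.1, mul_comm, ← hB.1.mul_apply_of_forall_lt (ih · · i), Matrix.sub_mul,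
        Matrix.one_mul]
    exact eq_zero_of_coeff_X_pow_mul_eq_zero fun l hl => hcol ▸ hdiff i j l hl
  rw [← hG, sub_eq_zero.mp (ext fun i j => hN j i), Matrix.one_mul]

lemma IsUpperTriangular.eq_rev_of_isLeast_maximalMinorOrders [Nontrivial R]
    {A : Matrix (Fin n) (Fin n) R⟦X⟧} {g : GL (Fin n) R⟦X⟧} {d m : Fin n → ℕ}
    (hB : ((g : Matrix (Fin n) (Fin n) R⟦X⟧) * A).IsUpperTriangular)
    (hdiag : ∀ i, ((g : Matrix (Fin n) (Fin n) R⟦X⟧) * A) i i = X ^ d i)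
    (hA : ∀ r : Fin n, IsLeast (A.submatrix id (Fin.castLE (Nat.sub_le n r))).maximalMinorOrders
      (lamOf m r : ℕ∞)) :
    d = fun i => m i.rev := by
  refine Finset.eq_of_forall_sum_Iic_eq fun j => ?_
  have hk : n - j.rev = j + 1 := by rw [Fin.val_rev]; omega
  have hB' := hB.isLeast_maximalMinorOrders_submatrix_castLE hdiag (Nat.sub_le n j.rev)
  rw [submatrix_mul _ _ _ _ _ Function.bijective_id, submatrix_id_id] at hB'
  have hsum := (hA j.rev).lowerBounds_eq.symm.trans <|
    (lowerBounds_maximalMinorOrders_GL_mul g _).symm.trans hB'.lowerBounds_eq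
  rw [Set.Iic_inj, Nat.cast_inj, lamOf_eq_sum_Iic_rev, Fin.sum_univ_castLE_eq_sum_Iic _ _ j hk,
    Fin.rev_rev] at hsum
  exact hsum.symm

end Matrix

/-- fix nonnegative integers `m_1, …, m_n` with associated partition
`λ_i = m_i + ⋯ + m_n`.  Every `n × n` matrix `A` over `ℂ[[t]]` whose determinant has
`t`-adic valuation `λ_1 + ⋯ + λ_n`, and whose `(n+1−r) × (n+1−r)` minors on the first
`n+1−r` columns have minimal valuation exactly `λ_r` for each `r` (the contact order
condition `Cont^λ(V_•)`), can be transformed by left multiplication by an element of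
`GL_n(ℂ[[t]])` into a unique upper-triangular matrix with `(i,i)`-entry `t^{m_{n+1−i}}`
and `(i,j)`-entry for `i < j` a polynomial in `t` of degree `< m_{n+1−j}`. -/
theorem stmt11 (n : ℕ) (m : Fin n → ℕ) (A : Matrix (Fin n) (Fin n) (PowerSeries ℂ))
    (hdet : PowerSeries.order A.det = ((∑ r : Fin n, lamOf m r : ℕ) : ℕ∞))
    (hmin : ∀ r : Fin n,
      (∀ s : Fin (n - r.val) ↪ Fin n,
        ((lamOf m r : ℕ) : ℕ∞) ≤
          PowerSeries.order (A.submatrix s (Fin.castLE (Nat.sub_le n r.val))).det) ∧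
      (∃ s : Fin (n - r.val) ↪ Fin n,
        PowerSeries.order (A.submatrix s (Fin.castLE (Nat.sub_le n r.val))).det
          = ((lamOf m r : ℕ) : ℕ∞))) :
    ∃! B : Matrix (Fin n) (Fin n) (PowerSeries ℂ),
      ((∀ i j, j < i → B i j = 0) ∧
       (∀ i, B i i = (PowerSeries.X : PowerSeries ℂ) ^ (m i.rev)) ∧
       (∀ i j, i < j → ∀ l, m j.rev ≤ l → PowerSeries.coeff l (B i j) = 0)) ∧
      ∃ g : GL (Fin n) (PowerSeries ℂ),
        (g : Matrix (Fin n) (Fin n) (PowerSeries ℂ)) * A = B := by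
  have hA : A.det ≠ 0 := fun h => ENat.top_ne_natCast _ (by rwa [h, order_zero] at hdet)
  obtain ⟨g, d, hB⟩ := exists_isHermiteForm_GL_mul A hA
  obtain rfl : d = fun i => m i.rev := hB.1.eq_rev_of_isLeast_maximalMinorOrders hB.2.1 fun r =>
    ⟨(hmin r).2, by rintro _ ⟨s, rfl⟩; exact (hmin r).1 s⟩
  refine ⟨_, ⟨hB, g, rfl⟩, ?_⟩
  rintro B' ⟨hB', g', rfl⟩
  refine hB.eq_of_mul_eq hB' (G := ((g' * g⁻¹ : GL (Fin n) ℂ⟦X⟧) : Matrix (Fin n) (Fin n) ℂ⟦X⟧)) ?_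
  rw [Units.val_mul, Matrix.mul_assoc, Units.inv_mul_cancel_left]
end
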